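/- For every α ≥ 0 and every z ≥ 0, the entire function h_α(z) = 2^{-α} ∑_{n=0}^∞ (z/2)^{2n} / (n! Γ(n+α+1)) satisfies h_α''(z)/h_α(z) + z^{-1} h_α'(z)/h_α(z) − (h_α'(z)/h_α(z))^2 > 0 (with the middle term interpreted via its limit at z = 0). -/

import Mathlib

/-- `h_α(z) = 2^{-α} ∑_{n≥0} (z/2)^{2n}/(n! Γ(n+α+1))`. -/
noncomputable def hA (α z : ℝ) : ℝ :=
  (2 : ℝ) ^ (-α) * ∑' n : ℕ, (z / 2) ^ (2 * n) / ((n.factorial : ℝ) * Real.Gamma ((n : ℝ) + α + 1))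

/-!
Put `t = z² / 4` and `g_α(t) = ∑ tⁿ / (n! Γ(n + α + 1))`, so that `h_α(z) = 2^{-α} g_α(t)`.
Since `(n + 1) / ((n + 1)! Γ(n + α + 2)) = 1 / (n! Γ(n + (α + 1) + 1))`, the family is closed under
differentiation, `g_α' = g_{α+1}`, and the chain rule turns the quantity into `E / g_α(t)²` with
`E = (g_{α+1} + t g_{α+2}) g_α - t g_{α+1}²`. For `t > 0`, the sums `t g_{α+1}` and
`t (g_{α+1} + t g_{α+2})` are the moments `∑ n uₙ` and `∑ n² uₙ` of the positive weights
`uₙ = tⁿ / (n! Γ(n + α + 1))`, so `t E = (∑ uₙ)(∑ n² uₙ) - (∑ n uₙ)² = ½ ∑_{m,n} (m - n)² uₘ uₙ > 0`.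
At `z = 0` the quantity is `2 h_α''(0) / h_α(0) = g_{α+1}(0) / g_α(0) > 0`.
-/

open Real
open scoped Nat

theorem HasSum.mul_of_summable_norm {R ι κ : Type*} [NormedRing R] [CompleteSpace R] {f : ι → R}
    {g : κ → R} {s t : R} (hf : HasSum f s) (hg : HasSum g t) (hf' : Summable fun i => ‖f i‖)
    (hg' : Summable fun j => ‖g j‖) : HasSum (fun p : ι × κ => f p.1 * g p.2) (s * t) :=
  hf.mul hg (summable_mul_of_summable_norm hf' hg')

theorem sq_lt_mul_of_hasSum {ι : Type*} {u f : ι → ℝ} {s₀ s₁ s₂ : ℝ} (hu : ∀ i, 0 ≤ u i)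
    (h₀ : HasSum u s₀) (h₁ : HasSum (fun i => f i * u i) s₁)
    (h₂ : HasSum (fun i => f i ^ 2 * u i) s₂) {i j : ι} (hi : 0 < u i) (hj : 0 < u j)
    (hij : f i ≠ f j) : s₁ ^ 2 < s₀ * s₂ := by
  have n₀ : Summable fun i => ‖u i‖ := by
    simpa only [Real.norm_of_nonneg (hu _)] using h₀.summable
  have n₂ : Summable fun i => ‖f i ^ 2 * u i‖ := by
    simpa only [Real.norm_of_nonneg (mul_nonneg (sq_nonneg _) (hu _))] using h₂.summable
  have n₁ : Summable fun i => ‖f i * u i‖ := by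
    refine (h₂.summable.add h₀.summable).of_nonneg_of_le (fun _ => norm_nonneg _) fun i => ?_
    rw [norm_mul, Real.norm_of_nonneg (hu i), Real.norm_eq_abs]
    nlinarith [hu i, sq_abs (f i), sq_nonneg (|f i| - 1)]
  have hF : HasSum (fun p : ι × ι => (f p.1 - f p.2) ^ 2 * (u p.1 * u p.2))
      (2 * (s₀ * s₂ - s₁ ^ 2)) := by
    have := ((h₂.mul_of_summable_norm h₀ n₂ n₀).add (h₀.mul_of_summable_norm h₂ n₀ n₂)).sub
      ((h₁.mul_of_summable_norm h₁ n₁ n₁).mul_left 2)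
    rw [show 2 * (s₀ * s₂ - s₁ ^ 2) = s₂ * s₀ + s₀ * s₂ - 2 * (s₁ * s₁) by ring]
    have e : (fun p : ι × ι => (f p.1 - f p.2) ^ 2 * (u p.1 * u p.2)) = fun p =>
        f p.1 ^ 2 * u p.1 * u p.2 + u p.1 * (f p.2 ^ 2 * u p.2)
          - 2 * (f p.1 * u p.1 * (f p.2 * u p.2)) := funext fun p => by ring
    rwa [e]
  have hterm : 0 < (f i - f j) ^ 2 * (u i * u j) :=
    mul_pos (sq_pos_of_ne_zero (sub_ne_zero.2 hij)) (mul_pos hi hj)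
  have hnn : ∀ p : ι × ι, 0 ≤ (f p.1 - f p.2) ^ 2 * (u p.1 * u p.2) := fun p =>
    mul_nonneg (sq_nonneg _) (mul_nonneg (hu _) (hu _))
  have := hasSum_lt (f := fun _ => (0 : ℝ)) (i := (i, j)) hnn hterm hasSum_zero hF
  linarith

theorem hasDerivAt_tsum_mul_pow {c : ℕ → ℝ}
    (hc : ∀ r, Summable fun n : ℕ => ‖((n : ℝ) + 1) * c (n + 1) * r ^ n‖) (x : ℝ) :
    HasDerivAt (fun y => ∑' n, c n * y ^ n) (∑' n : ℕ, ((n : ℝ) + 1) * c (n + 1) * x ^ n) x := by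
  set R := |x| + 1
  have hbound : Summable fun n : ℕ => ‖c n‖ * n * R ^ (n - 1) := by
    refine (summable_nat_add_iff 1).mp ((hc R).congr fun n => ?_)
    rw [norm_mul, norm_mul, Real.norm_of_nonneg (by positivity : (0 : ℝ) ≤ n + 1),
      norm_pow, Real.norm_of_nonneg (by positivity : (0 : ℝ) ≤ R)]
    push_cast
    ring
  have hderiv : HasSum (fun n : ℕ => c n * (n * x ^ (n - 1)))
      (∑' n : ℕ, ((n : ℝ) + 1) * c (n + 1) * x ^ n) := by
    have h := HasSum.zero_add (f := fun n : ℕ => c n * (n * x ^ (n - 1)))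
      (((hc x).of_norm.hasSum).congr_fun fun n => ?_)
    · simpa using h
    · push_cast
      ring
  rw [← hderiv.tsum_eq]
  refine hasDerivAt_tsum_of_isPreconnected hbound Metric.isOpen_ball
    (convex_ball (0 : ℝ) R).isPreconnected (fun n y _ => (hasDerivAt_pow n y).const_mul (c n))
    (fun n y hy => ?_) (Metric.mem_ball_self (by positivity)) ?_ ?_
  · rw [norm_mul, norm_mul, norm_pow, Real.norm_natCast, mul_assoc]
    gcongr
    simpa using (Metric.mem_ball.1 hy).le
  · exact (hasSum_single 0 fun n hn => by simp [hn]).summable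
  · simp [R]

theorem factorial_mul_Gamma_add_one_le {α : ℝ} (hα : 0 ≤ α) (n : ℕ) :
    n ! * Gamma (α + 1) ≤ Gamma (n + α + 1) := by
  induction n with
  | zero => simp
  | succ n ih =>
    rw [Nat.factorial_succ, Nat.cast_mul, Nat.cast_succ,
      show ((n : ℝ) + 1) + α + 1 = (n + α + 1) + 1 by ring,
      Gamma_add_one (by positivity : (0 : ℝ) < n + α + 1).ne', mul_assoc]
    exact mul_le_mul (by linarith) ih (by positivity) (by positivity)

noncomputable def besselCoeff (α : ℝ) (n : ℕ) : ℝ := ((n ! : ℝ) * Gamma (n + α + 1))⁻¹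

noncomputable def besselSeries (α t : ℝ) : ℝ := ∑' n, besselCoeff α n * t ^ n

theorem besselCoeff_pos {α : ℝ} (hα : -1 < α) (n : ℕ) : 0 < besselCoeff α n := by
  have := Gamma_pos_of_pos (by linarith : (0 : ℝ) < n + α + 1)
  unfold besselCoeff
  positivity

theorem succ_mul_besselCoeff_succ (α : ℝ) (n : ℕ) :
    ((n : ℝ) + 1) * besselCoeff α (n + 1) = besselCoeff (α + 1) n := by
  unfold besselCoeff
  rw [Nat.factorial_succ, Nat.cast_mul, Nat.cast_succ, mul_assoc, mul_inv, ← mul_assoc,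
    mul_inv_cancel₀ (by positivity), one_mul]
  ring_nf

theorem summable_norm_besselCoeff_mul_pow {α : ℝ} (hα : 0 ≤ α) (t : ℝ) :
    Summable fun n => ‖besselCoeff α n * t ^ n‖ := by
  have hΓ := Gamma_pos_of_pos (by linarith : (0 : ℝ) < α + 1)
  refine ((Real.summable_pow_div_factorial |t|).div_const (Gamma (α + 1))).of_nonneg_of_le
    (fun _ => norm_nonneg _) fun n => ?_
  rw [norm_mul, Real.norm_of_nonneg (besselCoeff_pos (by linarith) n).le, norm_pow,
    Real.norm_eq_abs, besselCoeff, div_div, mul_comm, div_eq_mul_inv]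
  gcongr
  calc Gamma (α + 1) ≤ n ! * Gamma (α + 1) :=
        le_mul_of_one_le_left hΓ.le (by exact_mod_cast n.factorial_pos)
    _ ≤ Gamma (n + α + 1) := factorial_mul_Gamma_add_one_le hα n

theorem hasSum_besselSeries {α : ℝ} (hα : 0 ≤ α) (t : ℝ) :
    HasSum (fun n => besselCoeff α n * t ^ n) (besselSeries α t) :=
  (summable_norm_besselCoeff_mul_pow hα t).of_norm.hasSum

theorem besselSeries_pos {α : ℝ} (hα : 0 ≤ α) {t : ℝ} (ht : 0 ≤ t) : 0 < besselSeries α t :=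
  (hasSum_besselSeries hα t).summable.tsum_pos
    (fun n => mul_nonneg (besselCoeff_pos (by linarith) n).le (pow_nonneg ht n)) 0
    (by simpa using besselCoeff_pos (by linarith) 0)

theorem hasDerivAt_besselSeries {α : ℝ} (hα : 0 ≤ α) (t : ℝ) :
    HasDerivAt (besselSeries α) (besselSeries (α + 1) t) t := by
  have h := hasDerivAt_tsum_mul_pow (c := besselCoeff α) (fun r => by
    simpa only [succ_mul_besselCoeff_succ] using
      summable_norm_besselCoeff_mul_pow (by linarith : 0 ≤ α + 1) r) t
  simp only [succ_mul_besselCoeff_succ] at h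
  exact h

theorem hasSum_natCast_mul_besselCoeff_mul_pow {α : ℝ} (hα : 0 ≤ α) (t : ℝ) :
    HasSum (fun n : ℕ => n * (besselCoeff α n * t ^ n)) (t * besselSeries (α + 1) t) := by
  have h := HasSum.zero_add (f := fun n : ℕ => n * (besselCoeff α n * t ^ n))
    (((hasSum_besselSeries (by linarith : 0 ≤ α + 1) t).mul_left t).congr_fun fun n => ?_)
  · simpa using h
  · rw [← succ_mul_besselCoeff_succ]
    push_cast
    ring

theorem hasSum_natCast_sq_mul_besselCoeff_mul_pow {α : ℝ} (hα : 0 ≤ α) (t : ℝ) :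
    HasSum (fun n : ℕ => (n : ℝ) ^ 2 * (besselCoeff α n * t ^ n))
      (t * (besselSeries (α + 1) t + t * besselSeries (α + 2) t)) := by
  have h₁ := hasSum_natCast_mul_besselCoeff_mul_pow (by linarith : 0 ≤ α + 1) t
  rw [show α + 1 + 1 = α + 2 by ring] at h₁
  have h := HasSum.zero_add (f := fun n : ℕ => (n : ℝ) ^ 2 * (besselCoeff α n * t ^ n))
    ((((hasSum_besselSeries (by linarith : 0 ≤ α + 1) t).add h₁).mul_left t).congr_fun
      fun n => ?_)
  · simpa using h
  · rw [← succ_mul_besselCoeff_succ]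
    push_cast
    ring

theorem mul_sq_besselSeries_lt {α : ℝ} (hα : 0 ≤ α) {t : ℝ} (ht : 0 < t) :
    t * besselSeries (α + 1) t ^ 2 <
      (besselSeries (α + 1) t + t * besselSeries (α + 2) t) * besselSeries α t := by
  have h := sq_lt_mul_of_hasSum (f := Nat.cast) (i := 0) (j := 1)
    (fun n => mul_nonneg (besselCoeff_pos (by linarith) n).le (pow_nonneg ht.le n))
    (hasSum_besselSeries hα t) (hasSum_natCast_mul_besselCoeff_mul_pow hα t)
    (hasSum_natCast_sq_mul_besselCoeff_mul_pow hα t)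
    (by simpa using besselCoeff_pos (by linarith) 0)
    (by simpa using mul_pos (besselCoeff_pos (by linarith) 1) ht) (by simp)
  exact lt_of_mul_lt_mul_left (by linear_combination h) ht.le

theorem hA_eq_besselSeries (α z : ℝ) : hA α z = (2 : ℝ) ^ (-α) * besselSeries α (z ^ 2 / 4) := by
  unfold hA besselSeries besselCoeff
  congr 1
  refine tsum_congr fun n => ?_
  rw [pow_mul, div_pow]
  ring

theorem hasDerivAt_besselSeries_sq_div_four {α : ℝ} (hα : 0 ≤ α) (z : ℝ) :
    HasDerivAt (fun z => besselSeries α (z ^ 2 / 4))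
      (z / 2 * besselSeries (α + 1) (z ^ 2 / 4)) z := by
  refine ((hasDerivAt_besselSeries hα (z ^ 2 / 4)).comp z
    ((hasDerivAt_pow 2 z).div_const 4)).congr_deriv ?_
  push_cast
  ring

theorem deriv_hA {α : ℝ} (hα : 0 ≤ α) :
    deriv (hA α) = fun z => (2 : ℝ) ^ (-α) * (z / 2 * besselSeries (α + 1) (z ^ 2 / 4)) := by
  funext z
  rw [funext (hA_eq_besselSeries α)]
  exact ((hasDerivAt_besselSeries_sq_div_four hα z).const_mul _).deriv

theorem deriv_deriv_hA {α : ℝ} (hα : 0 ≤ α) : deriv (deriv (hA α)) = fun z =>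
    (2 : ℝ) ^ (-α) * (besselSeries (α + 1) (z ^ 2 / 4) / 2 +
      z ^ 2 / 4 * besselSeries (α + 2) (z ^ 2 / 4)) := by
  funext z
  have h : HasDerivAt (fun z => (2 : ℝ) ^ (-α) * (z / 2 * besselSeries (α + 1) (z ^ 2 / 4)))
      ((2 : ℝ) ^ (-α) * (1 / 2 * besselSeries (α + 1) (z ^ 2 / 4) +
        z / 2 * (z / 2 * besselSeries (α + 1 + 1) (z ^ 2 / 4)))) z :=
    (((hasDerivAt_id' z).div_const 2).mul
      (hasDerivAt_besselSeries_sq_div_four (by linarith : 0 ≤ α + 1) z)).const_mul _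
  rw [deriv_hA hα, h.deriv, show α + 1 + 1 = α + 2 by ring]
  ring

/-- For every `α ≥ 0` and `z ≥ 0`,
`h_α''(z)/h_α(z) + z⁻¹ h_α'(z)/h_α(z) − (h_α'(z)/h_α(z))² > 0`,
the middle term at `z = 0` being interpreted via its limit `h_α''(0)/h_α(0)`. -/
theorem stmt0 (α : ℝ) (hα : 0 ≤ α) (z : ℝ) (hz : 0 ≤ z) :
    0 < deriv (deriv (hA α)) z / hA α z
      + (if z = 0 then deriv (deriv (hA α)) 0 / hA α 0
          else z⁻¹ * (deriv (hA α) z / hA α z))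
      - (deriv (hA α) z / hA α z) ^ 2 := by
  have hC : 0 < (2 : ℝ) ^ (-α) := rpow_pos_of_pos two_pos _
  rw [deriv_deriv_hA hα, deriv_hA hα]
  simp only [hA_eq_besselSeries]
  rcases hz.eq_or_lt with rfl | hz
  · norm_num
    exact div_pos (mul_pos hC (half_pos (besselSeries_pos (by linarith) le_rfl)))
      (mul_pos hC (besselSeries_pos hα le_rfl))
  · set t := z ^ 2 / 4 with ht_def
    have htpos : 0 < t := by positivity
    have hg := besselSeries_pos hα htpos.le
    rw [if_neg hz.ne']
    calc 0 < ((besselSeries (α + 1) t + t * besselSeries (α + 2) t) * besselSeries α t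
          - t * besselSeries (α + 1) t ^ 2) / besselSeries α t ^ 2 :=
          div_pos (sub_pos.2 (mul_sq_besselSeries_lt hα htpos)) (by positivity)
      _ = _ := by
          rw [ht_def]
          field_simp
          ring
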